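/- arXiv:1911.10502 — 6 statements merged into one kernel-verified Lean document; each statement's English description precedes it below -/
import Mathlib

section
/- Let G be a finite connected simple graph that is not a tree (i.e., G contains at least one cycle). If every cycle of G has length at most 4, then G has no good vertex; that is, for every vertex v of G, either G − v is disconnected or W(G − v) ≠ W(G). -/
open SimpleGraph

/-- The Wiener index: sum of distances over unordered pairs of vertices. -/
noncomputable def wiener {V : Type*} [Fintype V] (G : SimpleGraph V) : ℕ :=
  (∑ u : V, ∑ v : V, G.dist u v) / 2

/-- The transmission of a vertex: sum of distances to all vertices. -/
noncomputable def transmission {V : Type*} [Fintype V] (G : SimpleGraph V) (v : V) : ℕ :=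
  ∑ u : V, G.dist v u

/-- The graph `G - v`: induced subgraph on the vertices distinct from `v`. -/
def delVert {V : Type*} (G : SimpleGraph V) (v : V) : SimpleGraph {u : V // u ≠ v} :=
  SimpleGraph.comap Subtype.val G

/-- A vertex is good if `G - v` is connected and has the same Wiener index as `G`. -/
def good {V : Type*} [Fintype V] [DecidableEq V] (G : SimpleGraph V) (v : V) : Prop :=
  (delVert G v).Connected ∧ wiener (delVert G v) = wiener G

/-! If `G - v` is connected, a walk between two vertices of `G - v` that passes through `v`
enters and leaves `v` along edges `a v`, `v b`. When `a ≠ b`, a shortest `a`–`b` path in `G - v`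
closes a cycle through `v`, so it has length at most `4 - 2 = 2` and the detour through `v` can be
replaced by it. Hence distances in `G - v` agree with those in `G`, and
`W(G) = W(G - v) + t(v)`, where the transmission `t(v)` is positive as `G` is connected. -/

theorem Fintype.sum_sum_eq_sum_sum_subtype_ne_add {α M : Type*} [Fintype α] [DecidableEq α]
    [AddCommMonoid M] (f : α → α → M) (hf : ∀ a b, f a b = f b a) (a : α)
    (haa : f a a = 0) :
    ∑ x, ∑ y, f x y = ∑ x : {x // x ≠ a}, ∑ y : {y // y ≠ a}, f x y + 2 • ∑ y, f a y := by
  simp only [Fintype.sum_eq_add_sum_subtype_ne _ a, haa, zero_add, Finset.sum_add_distrib, hf _ a]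
  abel

namespace SimpleGraph

variable {V : Type*} {G : SimpleGraph V}

theorem Walk.IsPath.isCycle_cons_cons {a v b : V} {p : G.Walk b a} (hp : p.IsPath)
    (hav : G.Adj a v) (hvb : G.Adj v b) (hab : a ≠ b) (hv : v ∉ p.support) :
    (Walk.cons hav (Walk.cons hvb p)).IsCycle := by
  rw [Walk.cons_isCycle_iff, Walk.cons_isPath_iff]
  refine ⟨⟨hp, hv⟩, ?_⟩
  simp only [Walk.edges_cons, List.mem_cons, Sym2.eq_iff, not_or]
  exact ⟨⟨fun h => hav.ne h.1, by simp [hab]⟩,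
    fun he => hv (p.snd_mem_support_of_mem_edges he)⟩

theorem Reachable.dist_map_le {W : Type*} {G' : SimpleGraph W} (f : G →g G') {u w : V}
    (hr : G.Reachable u w) : G'.dist (f u) (f w) ≤ G.dist u w := by
  obtain ⟨p, hp⟩ := hr.exists_walk_length_eq_dist
  exact hp ▸ p.length_map f ▸ dist_le (p.map f)

end SimpleGraph

section delVert

variable {V : Type*} {G : SimpleGraph V} {v : V}

@[simps!]
def delVertHom (G : SimpleGraph V) (v : V) : delVert G v →g G :=
  Hom.comap Subtype.val G

theorem dist_le_dist_delVert {u w : {x // x ≠ v}} (hr : (delVert G v).Reachable u w) :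
    G.dist u w ≤ (delVert G v).dist u w :=
  hr.dist_map_le (delVertHom G v)

theorem dist_delVert_le_two (hshort : ∀ (u : V) (w : G.Walk u u), w.IsCycle → w.length ≤ 4)
    {a b : {x // x ≠ v}} (hav : G.Adj a v) (hvb : G.Adj v b) (hab : a ≠ b)
    (hr : (delVert G v).Reachable a b) : (delVert G v).dist a b ≤ 2 := by
  obtain ⟨P, hP, hPlen⟩ := hr.exists_path_of_dist
  have hv : v ∉ (P.map (delVertHom G v)).reverse.support := by
    simp only [Walk.support_reverse, Walk.support_map, List.mem_reverse, List.mem_map,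
      delVertHom_apply]
    rintro ⟨x, -, hx⟩
    exact x.2 hx
  have hcyc := ((hP.map Subtype.val_injective).reverse).isCycle_cons_cons hav hvb
    (Subtype.val_injective.ne hab) hv
  have hlen : (P.map (delVertHom G v)).reverse.length + 2 ≤ 4 := hshort _ _ hcyc
  rw [Walk.length_reverse, Walk.length_map] at hlen
  omega

theorem dist_delVert_le_length (hshort : ∀ (u : V) (w : G.Walk u u), w.IsCycle → w.length ≤ 4)
    (hconn : (delVert G v).Connected) {u w : V} (hu : u ≠ v) (hw : w ≠ v) (p : G.Walk u w) :
    (delVert G v).dist ⟨u, hu⟩ ⟨w, hw⟩ ≤ p.length := by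
  cases p with
  | nil => simp
  | @cons _ x _ hux p =>
    by_cases hx : x = v
    · cases p with
      | nil => exact absurd hx hw
      | @cons _ b _ hvb q =>
        rw [hx] at hux hvb
        have hq := dist_delVert_le_length hshort hconn hvb.ne' hw q
        by_cases hub : u = b
        · subst hub
          simp only [Walk.length_cons]
          omega
        · calc (delVert G v).dist ⟨u, hu⟩ ⟨w, hw⟩
              ≤ (delVert G v).dist ⟨u, hu⟩ ⟨b, hvb.ne'⟩ +
                  (delVert G v).dist ⟨b, hvb.ne'⟩ ⟨w, hw⟩ :=
                hconn.dist_triangle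
            _ ≤ 2 + q.length :=
                add_le_add (dist_delVert_le_two hshort hux hvb (by simpa using hub) (hconn _ _)) hq
            _ = _ := by simp only [Walk.length_cons]; omega
    · have hux' : (delVert G v).Adj ⟨u, hu⟩ ⟨x, hx⟩ := hux
      calc (delVert G v).dist ⟨u, hu⟩ ⟨w, hw⟩
          ≤ (delVert G v).dist ⟨u, hu⟩ ⟨x, hx⟩ + (delVert G v).dist ⟨x, hx⟩ ⟨w, hw⟩ :=
            hconn.dist_triangle
        _ ≤ 1 + p.length :=
            add_le_add (dist_eq_one_iff_adj.mpr hux').le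
              (dist_delVert_le_length hshort hconn hx hw p)
        _ = _ := by simp only [Walk.length_cons]; omega
termination_by p.length

theorem dist_delVert_eq (hshort : ∀ (u : V) (w : G.Walk u u), w.IsCycle → w.length ≤ 4)
    (hconn : (delVert G v).Connected) (u w : {x // x ≠ v}) :
    (delVert G v).dist u w = G.dist u w := by
  refine le_antisymm ?_ (dist_le_dist_delVert (hconn u w))
  obtain ⟨p, hp⟩ := ((hconn u w).map (delVertHom G v)).exists_walk_length_eq_dist
  exact hp ▸ dist_delVert_le_length hshort hconn u.2 w.2 p

theorem wiener_eq_wiener_delVert_add_transmission [Fintype V] [DecidableEq V]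
    (hshort : ∀ (u : V) (w : G.Walk u u), w.IsCycle → w.length ≤ 4)
    (hconn : (delVert G v).Connected) :
    wiener G = wiener (delVert G v) + transmission G v := by
  rw [wiener, wiener, transmission,
    Fintype.sum_sum_eq_sum_sum_subtype_ne_add _ (fun _ _ => dist_comm) v dist_self]
  simp_rw [dist_delVert_eq hshort hconn, smul_eq_mul]
  omega

end delVert

theorem SimpleGraph.Connected.transmission_pos {V : Type*} [Fintype V] {G : SimpleGraph V}
    (hG : G.Connected) {u v : V} (huv : u ≠ v) : 0 < transmission G v :=
  (hG.pos_dist_of_ne huv.symm).trans_le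
    (Finset.single_le_sum (fun _ _ => Nat.zero_le _) (Finset.mem_univ u))

theorem no_good_vertex_of_cycles_le_four_general {V : Type*} [Fintype V] [DecidableEq V]
    (G : SimpleGraph V) (hG : G.Connected)
    (hshort : ∀ (u : V) (w : G.Walk u u), w.IsCycle → w.length ≤ 4) :
    ∀ v : V, ¬ good G v := by
  rintro v ⟨hconn, hwiener⟩
  obtain ⟨⟨u, hu⟩⟩ := hconn.nonempty
  have hsplit := wiener_eq_wiener_delVert_add_transmission hshort hconn
  have hpos := hG.transmission_pos hu
  omega

/-- If every cycle of a connected graph (that has at least one cycle) has length at most 4,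
then the graph has no good vertex. -/
theorem no_good_vertex_of_cycles_le_four {V : Type*} [Fintype V] [DecidableEq V]
    (G : SimpleGraph V) (hG : G.Connected)
    (hnotTree : ∃ (u : V) (w : G.Walk u u), w.IsCycle)
    (hshort : ∀ (u : V) (w : G.Walk u u), w.IsCycle → w.length ≤ 4) :
    ∀ v : V, ¬ good G v :=
  no_good_vertex_of_cycles_le_four_general G hG hshort
end

section
/- Let G be a finite connected simple graph with at least 3 vertices. Every good vertex of G lies on a cycle of G. -/
open SimpleGraph

/-!
If `v` has two distinct neighbours `a` and `b`, a path from `b` to `a` in the connected graph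
`G - v` closes up through `v` into a cycle. Otherwise `v` is a leaf, so it is an inner vertex of
no path; distances between the other vertices do not grow when `v` is deleted, and the Wiener
index drops by at least the transmission of `v`, which is positive.
-/

namespace SimpleGraph

variable {V : Type*} {G : SimpleGraph V}

lemma Connected.dist_induce_le_of_subsingleton_neighborSet (hG : G.Connected) {s : Set V}
    (hs : ∀ v ∉ s, (G.neighborSet v).Subsingleton) (u w : s) :
    (G.induce s).dist u w ≤ G.dist u w := by
  obtain ⟨p, hp, hlen⟩ := hG.exists_path_of_dist u w
  have hps : ∀ x ∈ p.support, x ∈ s := fun x hx => by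
    by_contra hxs
    exact hp.isTrail.not_mem_support_of_subsingleton_neighborSet
      (fun h : x = u => hxs (h ▸ u.2)) (fun h : x = w => hxs (h ▸ w.2)) (hs x hxs) hx
  calc (G.induce s).dist u w ≤ (p.induce s hps).length := dist_le _
    _ = p.length := by rw [← (p.induce s hps).length_map, Walk.map_induce]; rfl
    _ = G.dist u w := hlen

end SimpleGraph

section

variable {V : Type*} {G : SimpleGraph V}

lemma sum_sum_dist_eq_two_mul_transmission_add [Fintype V] [DecidableEq V] (v : V) :
    ∑ u, ∑ w, G.dist u w =
      2 * transmission G v + ∑ u : {u // u ≠ v}, ∑ w : {w // w ≠ v}, G.dist u w := by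
  simp only [transmission, Fintype.sum_eq_add_sum_subtype_ne _ v, dist_self,
    Finset.sum_add_distrib, dist_comm (v := v)]
  ring

lemma wiener_delVert_lt [Fintype V] [DecidableEq V] (hG : G.Connected) {v : V}
    (hv : (G.neighborSet v).Subsingleton) [Nonempty {u // u ≠ v}] :
    wiener (delVert G v) < wiener G := by
  obtain ⟨u⟩ : Nonempty {u // u ≠ v} := inferInstance
  have htr : 0 < transmission G v :=
    (hG.pos_dist_of_ne u.2.symm).trans_le (Finset.single_le_sum (by simp) (Finset.mem_univ _))
  have hle : ∑ u, ∑ w, (delVert G v).dist u w ≤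
      ∑ u : {u // u ≠ v}, ∑ w : {w // w ≠ v}, G.dist u w :=
    -- `delVert G v` is definitionally `G.induce {u | u ≠ v}`
    Finset.sum_le_sum fun u _ => Finset.sum_le_sum fun w _ =>
      hG.dist_induce_le_of_subsingleton_neighborSet (s := {u | u ≠ v})
        (fun x hx => not_not.mp hx ▸ hv) u w
  unfold wiener
  rw [sum_sum_dist_eq_two_mul_transmission_add v]
  omega

lemma exists_isCycle_mem_support_of_reachable_delVert {v a b : V} (ha : G.Adj v a)
    (hb : G.Adj v b) (hab : a ≠ b) (hr : (delVert G v).Reachable ⟨b, hb.ne'⟩ ⟨a, ha.ne'⟩) :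
    ∃ (u : V) (c : G.Walk u u), c.IsCycle ∧ v ∈ c.support := by
  let f : delVert G v →g G.deleteEdges {s(v, a)} :=
    ⟨Subtype.val, fun {x y} hxy => deleteEdges_adj.mpr ⟨hxy, fun h => by
      rcases Sym2.eq_iff.mp h with ⟨hx, -⟩ | ⟨-, hy⟩
      exacts [x.2 hx, y.2 hy]⟩⟩
  have hvb : (G.deleteEdges {s(v, a)}).Adj v b :=
    deleteEdges_adj.mpr ⟨hb, fun h => hab (Sym2.congr_right.mp h).symm⟩
  obtain ⟨u, c, hc, he⟩ := adj_and_reachable_delete_edges_iff_exists_cycle.mp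
    ⟨ha, hvb.reachable.trans (hr.map f)⟩
  exact ⟨u, c, hc, c.fst_mem_support_of_mem_edges he⟩

end

theorem good_vertex_mem_cycle_general {V : Type*} [Fintype V] [DecidableEq V]
    (G : SimpleGraph V) (hG : G.Connected)
    (v : V) (hv : good G v) :
    ∃ (u : V) (w : G.Walk u u), w.IsCycle ∧ v ∈ w.support := by
  obtain ⟨hconn, hW⟩ := hv
  by_cases hv1 : (G.neighborSet v).Subsingleton
  · have := hconn.nonempty
    exact absurd hW (wiener_delVert_lt hG hv1).ne
  · obtain ⟨a, ha, b, hb, hab⟩ := Set.not_subsingleton_iff.mp hv1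
    exact exists_isCycle_mem_support_of_reachable_delVert ha hb hab (hconn.preconnected _ _)

/-- In a connected graph with at least 3 vertices, every good vertex lies on a cycle. -/
theorem good_vertex_mem_cycle {V : Type*} [Fintype V] [DecidableEq V]
    (G : SimpleGraph V) (hG : G.Connected) (hcard : 3 ≤ Fintype.card V)
    (v : V) (hv : good G v) :
    ∃ (u : V) (w : G.Walk u u), w.IsCycle ∧ v ∈ w.support :=
  good_vertex_mem_cycle_general G hG v hv
end

section
/- Every Šoltés graph on at least 2 vertices contains a cycle of length at least 5; that is, if G is a finite connected simple graph with at least 2 vertices such that every vertex of G is good, then G has a cycle of length at least 5. -/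
open SimpleGraph

/-!
Fix any vertex `v`. Deleting `v` removes its transmission, which is positive, from the Wiener
index, and can only increase the other distances; since `W(G - v) = W(G)`, some pair `u, w`
is strictly farther apart in `G - v` than in `G`. Hence every shortest `u`–`w` path of `G`
passes through `v`, say as `… a, v, b …`. If `a` and `b` were at distance at most `2` in
`G - v`, rerouting around `v` would give a `u`–`w` walk in `G - v` of length at most
`d_G(u, w)`. So `d_{G-v}(a, b) ≥ 3`, and a shortest `a`–`b` path of `G - v` closes up
through `v` into a cycle of length at least `5`.
-/

namespace SimpleGraph

variable {V : Type*} {G : SimpleGraph V} {v : V}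

lemma Walk.IsPath.exists_adj_adj_of_mem_support [DecidableEq V] {u w : V} {p : G.Walk u w}
    (hp : p.IsPath) (hv : v ∈ p.support) (hu : u ≠ v) (hw : w ≠ v) :
    ∃ (a b : V) (q₁ : G.Walk u a) (q₂ : G.Walk b w), G.Adj v a ∧ G.Adj v b ∧
      v ∉ q₁.support ∧ v ∉ q₂.support ∧ q₁.length + q₂.length + 2 = p.length := by
  obtain ⟨a, hva, q₁, hq₁⟩ := Walk.exists_eq_cons_of_ne hu.symm (p.takeUntil v hv).reverse
  obtain ⟨b, hvb, q₂, hq₂⟩ := Walk.exists_eq_cons_of_ne hw.symm (p.dropUntil v hv)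
  have hp₁ := (hp.takeUntil hv).reverse
  have hp₂ := hp.dropUntil hv
  rw [hq₁, Walk.cons_isPath_iff] at hp₁
  rw [hq₂, Walk.cons_isPath_iff] at hp₂
  refine ⟨a, b, q₁.reverse, q₂, hva, hvb, by simpa using hp₁.2, hp₂.2, ?_⟩
  have hlen₁ := congrArg Walk.length hq₁
  have hlen₂ := congrArg Walk.length hq₂
  rw [← congrArg Walk.length (p.take_spec hv), Walk.length_append]
  simp only [Walk.length_reverse, Walk.length_cons] at hlen₁ hlen₂ ⊢
  omega

lemma Walk.IsPath.exists_isCycle_length_eq_add_two {a b : V} {p : G.Walk a b} (hp : p.IsPath)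
    (hv : v ∉ p.support) (ha : G.Adj v a) (hb : G.Adj v b) (hab : a ≠ b) :
    ∃ c : G.Walk v v, c.IsCycle ∧ c.length = p.length + 2 := by
  refine ⟨.cons ha (p.concat hb.symm), (Walk.cons_isCycle_iff _ _).2
    ⟨hp.concat hv hb.symm, fun he => ?_⟩, by simp⟩
  rw [Walk.edges_concat, List.concat_eq_append, List.mem_append, List.mem_singleton] at he
  rcases he with he | he
  · exact hv (p.fst_mem_support_of_mem_edges he)
  · simp only [Sym2.eq_iff, true_and] at he
    rcases he with ⟨-, he⟩ | he
    · exact hv (he ▸ p.start_mem_support)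
    · exact hab he

lemma dist_delVert_le_length {a b : V} (p : G.Walk a b) (hp : v ∉ p.support) (ha : a ≠ v)
    (hb : b ≠ v) : (delVert G v).dist ⟨a, ha⟩ ⟨b, hb⟩ ≤ p.length := by
  have hs : ∀ x ∈ p.support, x ∈ {x | x ≠ v} := fun x hx h => hp (h ▸ hx)
  have hlen := congrArg Walk.length (p.map_induce hs)
  rw [Walk.length_map] at hlen
  exact (dist_le (p.induce _ hs)).trans_eq hlen

def delVertEmbedding (G : SimpleGraph V) (v : V) : delVert G v ↪g G :=
  Embedding.comap (Function.Embedding.subtype _) G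

lemma dist_le_dist_delVert {u w : {x : V // x ≠ v}} (h : (delVert G v).Reachable u w) :
    G.dist u w ≤ (delVert G v).dist u w := by
  obtain ⟨p, hp⟩ := h.exists_walk_length_eq_dist
  exact (dist_le (p.map (delVertEmbedding G v).toHom)).trans_eq (by rw [Walk.length_map, hp])

lemma exists_isCycle_length_eq_dist_delVert_add_two {a b : {x : V // x ≠ v}}
    (hr : (delVert G v).Reachable a b) (ha : G.Adj v a) (hb : G.Adj v b) (hab : a ≠ b) :
    ∃ c : G.Walk v v, c.IsCycle ∧ c.length = (delVert G v).dist a b + 2 := by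
  obtain ⟨r, hr, hlen⟩ := hr.exists_path_of_dist
  have hv : v ∉ (r.map (delVertEmbedding G v).toHom).support := by
    simp only [Walk.support_map, List.mem_map, not_exists, not_and]
    exact fun x _ hx => x.2 hx
  obtain ⟨c, hc, hlen'⟩ := (hr.map (delVertEmbedding G v).injective)
    |>.exists_isCycle_length_eq_add_two hv ha hb (Subtype.coe_ne_coe.2 hab)
  exact ⟨c, hc, by rw [hlen', Walk.length_map, hlen]⟩

lemma transmission_pos [Fintype V] (hG : G.Connected) {u : V} (hu : u ≠ v) :
    0 < transmission G v :=
  (hG.pos_dist_of_ne hu.symm).trans_le (Finset.single_le_sum (by simp) (Finset.mem_univ u))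

section Wiener

variable [Fintype V] [DecidableEq V]

lemma sum_sum_dist_eq (G : SimpleGraph V) (v : V) :
    ∑ u, ∑ w, G.dist u w =
      ∑ u : {x // x ≠ v}, ∑ w : {x // x ≠ v}, G.dist u w + 2 * transmission G v := by
  have hrow : ∑ w : {x // x ≠ v}, G.dist v w = transmission G v := by
    rw [transmission, Fintype.sum_eq_add_sum_subtype_ne _ v, dist_self, zero_add]
  have hcol : ∑ u : {x // x ≠ v}, G.dist u v = transmission G v := by
    simpa only [dist_comm] using hrow
  rw [Fintype.sum_eq_add_sum_subtype_ne _ v, Fintype.sum_eq_add_sum_subtype_ne _ v, hrow,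
    Finset.sum_congr rfl fun (u : {x // x ≠ v}) _ =>
      Fintype.sum_eq_add_sum_subtype_ne (G.dist u) v,
    Finset.sum_add_distrib, hcol, dist_self]
  ring

lemma wiener_eq_add_transmission (G : SimpleGraph V) (v : V) :
    wiener G =
      (∑ u : {x // x ≠ v}, ∑ w : {x // x ≠ v}, G.dist u w) / 2 + transmission G v := by
  rw [wiener, sum_sum_dist_eq G v, Nat.add_mul_div_left _ _ two_pos]

lemma exists_dist_lt_dist_delVert (hG : G.Connected) (hv : good G v) :
    ∃ u w : {x // x ≠ v}, G.dist u w < (delVert G v).dist u w := by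
  obtain ⟨hconn, hW⟩ := hv
  by_contra! hle
  have hdist : ∀ u w, (delVert G v).dist u w = G.dist u w :=
    fun u w => (hle u w).antisymm (dist_le_dist_delVert (hconn.preconnected u w))
  obtain ⟨⟨u, hu⟩⟩ := hconn.nonempty
  have hpos := transmission_pos hG hu
  rw [wiener_eq_add_transmission G v, wiener] at hW
  simp only [hdist] at hW
  omega

end Wiener

lemma exists_adj_adj_three_le_dist_delVert [DecidableEq V] (hG : G.Connected)
    (hconn : (delVert G v).Connected) {u w : {x // x ≠ v}}
    (hlt : G.dist u w < (delVert G v).dist u w) :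
    ∃ a b : {x // x ≠ v}, G.Adj v a ∧ G.Adj v b ∧ 3 ≤ (delVert G v).dist a b := by
  obtain ⟨p, hp, hlen⟩ := hG.exists_path_of_dist u w
  have hv : v ∈ p.support := by
    by_contra hv
    exact (dist_delVert_le_length p hv u.2 w.2).not_gt (hlen ▸ hlt)
  obtain ⟨a, b, q₁, q₂, ha, hb, hq₁, hq₂, hq⟩ :=
    hp.exists_adj_adj_of_mem_support hv u.2 w.2
  set a' : {x // x ≠ v} := ⟨a, ha.ne.symm⟩
  set b' : {x // x ≠ v} := ⟨b, hb.ne.symm⟩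
  refine ⟨a', b', ha, hb, ?_⟩
  -- Rerouting `u → a ⇝ b → w` inside `G - v` must not beat `d_G(u, w) = |q₁| + |q₂| + 2`.
  have hreroute := calc
    (delVert G v).dist u w
      ≤ (delVert G v).dist u a' + (delVert G v).dist a' b' + (delVert G v).dist b' w :=
        hconn.dist_triangle.trans (Nat.add_le_add_right hconn.dist_triangle _)
    _ ≤ q₁.length + (delVert G v).dist a' b' + q₂.length := by
        gcongr
        · exact dist_delVert_le_length q₁ hq₁ u.2 a'.2
        · exact dist_delVert_le_length q₂ hq₂ b'.2 w.2
  omega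

end SimpleGraph

theorem soltes_graph_has_long_cycle_general {V : Type*} [Fintype V] [DecidableEq V]
    (G : SimpleGraph V) (hG : G.Connected)
    (hsoltes : ∀ v : V, good G v) :
    ∃ (u : V) (w : G.Walk u u), w.IsCycle ∧ 5 ≤ w.length := by
  obtain ⟨v⟩ := hG.nonempty
  obtain ⟨u, w, hlt⟩ := exists_dist_lt_dist_delVert hG (hsoltes v)
  have hconn := (hsoltes v).1
  obtain ⟨a, b, ha, hb, hab⟩ := exists_adj_adj_three_le_dist_delVert hG hconn hlt
  have hne : a ≠ b := by rintro rfl; simp at hab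
  obtain ⟨c, hc, hlen⟩ :=
    exists_isCycle_length_eq_dist_delVert_add_two (hconn.preconnected a b) ha hb hne
  exact ⟨v, c, hc, by omega⟩

/-- Every Šoltés graph on at least 2 vertices contains a cycle of length at least 5. -/
theorem soltes_graph_has_long_cycle {V : Type*} [Fintype V] [DecidableEq V]
    (G : SimpleGraph V) (hG : G.Connected) (hcard : 2 ≤ Fintype.card V)
    (hsoltes : ∀ v : V, good G v) :
    ∃ (u : V) (w : G.Walk u u), w.IsCycle ∧ 5 ≤ w.length :=
  soltes_graph_has_long_cycle_general G hG hsoltes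
end

section
/- Let G be a finite connected simple graph with a fixed vertex v₁ such that G − v₁ is connected, let u be a vertex of G with u ≠ v₁, and let G⁺ be the graph obtained from G by adding a new vertex z joined by a pendant edge to u. Writing δ_H(x) = t_H(x) − t_{H−v₁}(x), we have δ_{G⁺}(z) = δ_{G⁺}(u) + 1 = δ_G(u) + 1. -/
open SimpleGraph

/-- `δ_G(x) = t_G(x) − t_{G−v₁}(x)` (as an integer), for a fixed vertex `v₁` and `x ≠ v₁`.
(The value when `x = v₁` is irrelevant and set to `t_G(x)`.) -/
noncomputable def delta {V : Type*} [Fintype V] [DecidableEq V]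
    (G : SimpleGraph V) (v₁ x : V) : ℤ :=
  (transmission G x : ℤ) - if h : x = v₁ then 0 else (transmission (delVert G v₁) ⟨x, h⟩ : ℤ)

/-- The graph `G⁺` on `V ∪ {z}` (here `Option V`, with `z = none`) obtained from `G`
by adding the single pendant edge between the new vertex `z` and `u`. -/
def addPendant {V : Type*} (G : SimpleGraph V) (u : V) : SimpleGraph (Option V) where
  Adj x y :=
    match x, y with
    | some a, some b => G.Adj a b
    | some a, none => a = u
    | none, some b => b = u
    | none, none => False
  symm := by
    constructor
    intro x y h
    cases x <;> cases y <;> simp_all <;> exact G.symm.symm _ _ h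
  loopless := by
    constructor
    intro x h
    cases x <;> simp_all

/-!
Collapsing the pendant vertex `z` onto `u` maps walks of `G⁺` to walks of `G` that are no
longer, so `G⁺` does not change distances between old vertices, and every shortest walk from
`z` starts with the edge `zu`, so `d(z, b) = d(u, b) + 1`. Hence `t_{G⁺}(u) = t_G(u) + 1` and
`t_{G⁺}(z) = t_G(u) + |V|`. Since `G⁺ − v₁` is the pendant extension of `G − v₁` at `u`, the
same holds there with `|V| - 1` in place of `|V|`, and subtracting gives both identities.
-/

namespace SimpleGraph

variable {V W : Type*} {G : SimpleGraph V} {H : SimpleGraph W}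

lemma Reachable.dist_map_le_s6 (f : G →g H) {a b : V} (h : G.Reachable a b) :
    H.dist (f a) (f b) ≤ G.dist a b := by
  obtain ⟨p, hp⟩ := h.exists_walk_length_eq_dist
  simpa [hp] using dist_le (p.map f)

lemma Iso.dist_map (e : G ≃g H) (a b : V) : H.dist (e a) (e b) = G.dist a b := by
  by_cases h : G.Reachable a b
  · refine le_antisymm (h.dist_map_le_s6 e.toHom) ?_
    simpa using (Iso.reachable_iff (φ := e) |>.mpr h).dist_map_le_s6 e.symm.toHom
  · rw [dist_eq_zero_of_not_reachable h,
      dist_eq_zero_of_not_reachable (mt Iso.reachable_iff.mp h)]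

end SimpleGraph

lemma transmission_iso {V W : Type*} [Fintype V] [Fintype W] {G : SimpleGraph V}
    {H : SimpleGraph W} (e : G ≃g H) (a : V) : transmission H (e a) = transmission G a := by
  unfold transmission
  rw [← e.toEquiv.sum_comp]
  exact Finset.sum_congr rfl fun b _ => e.dist_map a b

lemma delta_of_ne {V : Type*} [Fintype V] [DecidableEq V] (G : SimpleGraph V) {v₁ x : V}
    (h : x ≠ v₁) :
    delta G v₁ x = transmission G x - transmission (delVert G v₁) ⟨x, h⟩ :=
  congrArg _ (dif_neg h)

namespace addPendant

variable {V : Type*} (G : SimpleGraph V) (u : V)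

def someHom : G →g addPendant G u := ⟨some, id⟩

variable {G u}

lemma exists_walk_getD_length_le {x y : Option V} (p : (addPendant G u).Walk x y) :
    ∃ q : G.Walk (x.getD u) (y.getD u), q.length ≤ p.length := by
  induction p with
  | nil => exact ⟨.nil, le_rfl⟩
  | @cons x x' y h p ih =>
    obtain ⟨q, hq⟩ := ih
    rcases x with _ | a <;> rcases x' with _ | b
    · exact h.elim
    · obtain rfl : b = u := h
      exact ⟨q, Nat.le_succ_of_le hq⟩
    · obtain rfl : a = u := h
      exact ⟨q, Nat.le_succ_of_le hq⟩
    · exact ⟨.cons h q, Nat.succ_le_succ hq⟩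

lemma dist_getD_le_of_reachable {x y : Option V} (h : (addPendant G u).Reachable x y) :
    G.dist (x.getD u) (y.getD u) ≤ (addPendant G u).dist x y := by
  obtain ⟨p, hp⟩ := h.exists_walk_length_eq_dist
  obtain ⟨q, hq⟩ := exists_walk_getD_length_le p
  exact (dist_le q).trans (hp ▸ hq)

lemma dist_some_some (a b : V) : (addPendant G u).dist (some a) (some b) = G.dist a b := by
  by_cases h : G.Reachable a b
  · exact le_antisymm (h.dist_map_le_s6 (someHom G u))
      (dist_getD_le_of_reachable (h.map (someHom G u)))
  · have h' : ¬ (addPendant G u).Reachable (some a) (some b) :=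
      fun ⟨p⟩ => h ⟨(exists_walk_getD_length_le p).choose⟩
    rw [dist_eq_zero_of_not_reachable h, dist_eq_zero_of_not_reachable h']

lemma dist_none_some {b : V} (h : G.Reachable u b) :
    (addPendant G u).dist none (some b) = G.dist u b + 1 := by
  have hz : (addPendant G u).Adj none (some u) := rfl
  have hzu : (addPendant G u).dist none (some u) = 1 := dist_eq_one_iff_adj.mpr hz
  refine le_antisymm ?_ ?_
  · simpa [hzu, dist_some_some, add_comm] using hz.reachable.dist_triangle_left (some b)
  · have hr : (addPendant G u).Reachable none (some b) := hz.reachable.trans (h.map (someHom G u))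
    obtain ⟨q, hq⟩ := hr.exists_walk_length_eq_dist
    cases q with
    | @cons _ x _ hx r =>
      rcases x with _ | c
      · exact hx.elim
      · have hc : c = u := hx
        have hdist : G.dist c b ≤ r.length := dist_some_some (G := G) c b ▸ dist_le r
        have hcu : G.dist u b = G.dist c b := by rw [hc]
        rw [← hq, hcu]
        exact Nat.succ_le_succ hdist

def delVertIso {v₁ : V} (hu : u ≠ v₁) :
    delVert (addPendant G u) (some v₁) ≃g addPendant (delVert G v₁) ⟨u, hu⟩ where
  toFun
    | ⟨none, _⟩ => none
    | ⟨some a, h⟩ => some ⟨a, fun ha => h (congrArg some ha)⟩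
  invFun
    | none => ⟨none, (Option.some_ne_none v₁).symm⟩
    | some a => ⟨some a, fun h => a.2 (Option.some_injective _ h)⟩
  left_inv := by rintro ⟨_ | a, h⟩ <;> rfl
  right_inv := by rintro (_ | ⟨a, h⟩) <;> rfl
  map_rel_iff' := by
    rintro ⟨_ | a, hx⟩ ⟨_ | b, hy⟩ <;> simp [delVert, addPendant, Subtype.ext_iff]

variable [Fintype V]

lemma transmission_some_self : transmission (addPendant G u) (some u) = transmission G u + 1 := by
  have hz : (addPendant G u).dist (some u) none = 1 := dist_eq_one_iff_adj.mpr rfl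
  simp only [transmission, Fintype.sum_option, hz, dist_some_some]
  omega

lemma transmission_none (hG : G.Preconnected) :
    transmission (addPendant G u) none = transmission G u + Fintype.card V := by
  simp only [transmission, Fintype.sum_option, dist_self, dist_none_some (hG u _),
    Finset.sum_add_distrib, Finset.card_univ, Finset.sum_const, smul_eq_mul, mul_one, zero_add]

variable [DecidableEq V] {v₁ : V}

lemma delta_some_self (hu : u ≠ v₁) :
    delta (addPendant G u) (some v₁) (some u) = delta G v₁ u := by
  have hu' : some u ≠ some v₁ := Option.some_injective _ |>.ne hu
  have hdel : transmission (delVert (addPendant G u) (some v₁)) ⟨some u, hu'⟩ =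
      transmission (delVert G v₁) ⟨u, hu⟩ + 1 :=
    (transmission_iso (delVertIso hu) _).symm.trans transmission_some_self
  rw [delta_of_ne _ hu', delta_of_ne _ hu, transmission_some_self, hdel]
  push_cast
  ring

lemma delta_none (hG : G.Preconnected) (hconn : (delVert G v₁).Preconnected) (hu : u ≠ v₁) :
    delta (addPendant G u) (some v₁) none = delta G v₁ u + 1 := by
  have hz : none ≠ some v₁ := (Option.some_ne_none v₁).symm
  have hcard : Fintype.card {w : V // w ≠ v₁} + 1 = Fintype.card V := by
    rw [Fintype.card_subtype_compl, Fintype.card_subtype_eq]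
    exact Nat.sub_add_cancel (Fintype.card_pos_iff.mpr ⟨v₁⟩)
  have hdel : transmission (delVert (addPendant G u) (some v₁)) ⟨none, hz⟩ =
      transmission (delVert G v₁) ⟨u, hu⟩ + Fintype.card {w : V // w ≠ v₁} :=
    (transmission_iso (delVertIso hu) _).symm.trans (transmission_none hconn)
  rw [delta_of_ne _ hz, delta_of_ne _ hu, transmission_none hG, hdel, ← hcard]
  push_cast
  ring

end addPendant

/-- Adding a pendant vertex `z` at `u ≠ v₁`: the new vertex satisfies
`δ_{G⁺}(z) = δ_{G⁺}(u) + 1 = δ_G(u) + 1`. -/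
theorem delta_addPendant {V : Type*} [Fintype V] [DecidableEq V]
    (G : SimpleGraph V) (hG : G.Connected) (v₁ : V) (hconn : (delVert G v₁).Connected)
    (u : V) (hu : u ≠ v₁) :
    delta (addPendant G u) (some v₁) none = delta (addPendant G u) (some v₁) (some u) + 1 ∧
    delta (addPendant G u) (some v₁) (some u) + 1 = delta G v₁ u + 1 := by
  rw [addPendant.delta_none hG.preconnected hconn.preconnected hu, addPendant.delta_some_self hu]
  exact ⟨rfl, rfl⟩
end

section
/- Let G be a finite connected simple graph with fixed distinct vertices v₁ and w such that G − v₁ is connected, and suppose δ_G(w) = −d for a natural number d ≥ 1. Let G₂ be the graph obtained from G by attaching a path u_d u_{d−1} … u_1 u_0 of length d at w (identifying u_d with w, the vertices u_{d−1}, …, u_0 being new). Then δ_{G₂}(u_i) = −i for every i ∈ {0, 1, …, d}. -/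
open SimpleGraph

/-- The graph obtained from `G` by attaching at `w` a path `u_d u_{d-1} ⋯ u_1 u_0` of length
`d`, identifying `u_d` with `w`; the new vertex `Sum.inr j` represents `u_j` (`0 ≤ j < d`). -/
def attachPath {V : Type*} (G : SimpleGraph V) (w : V) (d : ℕ) : SimpleGraph (V ⊕ Fin d) where
  Adj x y :=
    match x, y with
    | Sum.inl a, Sum.inl b => G.Adj a b
    | Sum.inl a, Sum.inr j => a = w ∧ (j : ℕ) = d - 1
    | Sum.inr j, Sum.inl a => a = w ∧ (j : ℕ) = d - 1
    | Sum.inr j, Sum.inr j' => (j : ℕ) + 1 = j' ∨ (j' : ℕ) + 1 = j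
  symm := by
    constructor
    intro x y h
    cases x <;> cases y <;> simp_all [SimpleGraph.adj_comm] <;> tauto
  loopless := by
    constructor
    intro x h
    cases x <;> simp_all

/-- The vertex `u_i` of `attachPath G w d`, for `0 ≤ i ≤ d` (with `u_d = w`). -/
def pathVert {V : Type*} (w : V) (d : ℕ) (i : ℕ) : V ⊕ Fin d :=
  if h : i < d then Sum.inr ⟨i, h⟩ else Sum.inl w

/-!
Every shortest walk from `u_i` into `G` leaves the path through `w`, so
`t_{G₂}(u_i) = |V|·(d - i) + t_G(w) + ∑_j |i - j|`. Deleting `v₁ ≠ w` commutes with attaching the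
path, so the same formula holds in `G₂ − v₁` with `G − v₁` in place of `G` and `|V| - 1` in place
of `|V|`. Subtracting, `δ_{G₂}(u_i) = (d - i) + δ_G(w) = -i`.
-/

namespace SimpleGraph

variable {V W : Type*} {G : SimpleGraph V} {H : SimpleGraph W}

theorem Hom.edist_le (f : G →g H) (u v : V) : H.edist (f u) (f v) ≤ G.edist u v := by
  by_cases hr : G.Reachable u v
  · obtain ⟨p, hp⟩ := hr.exists_walk_length_eq_edist
    rw [← hp, ← p.length_map f]
    exact SimpleGraph.edist_le _
  · rw [edist_eq_top_of_not_reachable hr]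
    exact le_top

theorem Iso.dist_eq (f : G ≃g H) (u v : V) : H.dist (f u) (f v) = G.dist u v := by
  have h : H.edist (f u) (f v) = G.edist u v :=
    le_antisymm (f.toHom.edist_le u v) (by simpa using f.symm.toHom.edist_le (f u) (f v))
  rw [dist, dist, h]

theorem Iso.transmission_eq [Fintype V] [Fintype W] (f : G ≃g H) (v : V) :
    transmission H (f v) = transmission G v := by
  unfold transmission
  exact (Fintype.sum_equiv f.toEquiv _ _ fun u => (f.dist_eq v u).symm).symm

theorem Walk.abs_sub_le_length (f : V → ℤ) (hf : ∀ ⦃x y⦄, G.Adj x y → |f x - f y| ≤ 1)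
    {u v : V} (p : G.Walk u v) : |f u - f v| ≤ p.length := by
  induction p with
  | nil => simp
  | @cons a b c h p ih =>
    calc |f a - f c| ≤ |f a - f b| + |f b - f c| := abs_sub_le _ _ _
      _ ≤ 1 + p.length := add_le_add (hf h) ih
      _ = (p.cons h).length := by push_cast [Walk.length_cons]; ring

theorem Walk.dist_eq_length_of_le_abs_sub (f : V → ℤ)
    (hf : ∀ ⦃x y⦄, G.Adj x y → |f x - f y| ≤ 1) {u v : V} (p : G.Walk u v)
    (hp : (p.length : ℤ) ≤ |f u - f v|) : G.dist u v = p.length := by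
  obtain ⟨q, hq⟩ := p.reachable.exists_walk_length_eq_dist
  have := q.abs_sub_le_length f hf
  have := dist_le p
  omega

end SimpleGraph

open SimpleGraph

section attachPath

variable {V : Type*} {G : SimpleGraph V} {w : V} {d : ℕ}

theorem pathVert_of_lt {i : ℕ} (hi : i < d) : pathVert w d i = Sum.inr ⟨i, hi⟩ :=
  dif_pos hi

theorem pathVert_self : pathVert w d d = Sum.inl w :=
  dif_neg (lt_irrefl d)

theorem pathVert_val (j : Fin d) : pathVert w d j = Sum.inr j :=
  pathVert_of_lt j.isLt

theorem attachPath_adj_pathVert_succ {i : ℕ} (hi : i < d) :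
    (attachPath G w d).Adj (pathVert w d i) (pathVert w d (i + 1)) := by
  rw [pathVert_of_lt hi]
  by_cases hi' : i + 1 < d
  · rw [pathVert_of_lt hi']
    exact Or.inl rfl
  · rw [show i + 1 = d by omega, pathVert_self]
    exact ⟨rfl, by simp; omega⟩

theorem exists_walk_pathVert {i j : ℕ} (hij : i ≤ j) (hj : j ≤ d) :
    ∃ p : (attachPath G w d).Walk (pathVert w d i) (pathVert w d j), p.length = j - i := by
  induction j, hij using Nat.le_induction with
  | base => exact ⟨.nil, by simp⟩
  | succ j hij ih =>
    obtain ⟨p, hp⟩ := ih (by omega)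
    refine ⟨p.concat (attachPath_adj_pathVert_succ (by omega)), ?_⟩
    rw [Walk.length_concat, hp]
    omega

/-- The distance from `Sum.inl a` in `attachPath G w d` when `G` is connected; since it changes
by at most one along edges, it bounds those distances from below. -/
noncomputable def attachPathDistFrom (G : SimpleGraph V) (w : V) (d : ℕ) (a : V) :
    V ⊕ Fin d → ℤ
  | Sum.inl x => G.dist a x
  | Sum.inr j => (G.dist a w : ℤ) + d - (j : ℕ)

theorem attachPathDistFrom_pathVert (a : V) {i : ℕ} (hi : i ≤ d) :
    attachPathDistFrom G w d a (pathVert w d i) = (G.dist a w : ℤ) + d - i := by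
  rcases hi.lt_or_eq with hi | rfl
  · rw [pathVert_of_lt hi]
    rfl
  · rw [pathVert_self]
    simp [attachPathDistFrom]

theorem abs_sub_attachPathDistFrom_le_one (a : V) ⦃x y : V ⊕ Fin d⦄
    (h : (attachPath G w d).Adj x y) :
    |attachPathDistFrom G w d a x - attachPathDistFrom G w d a y| ≤ 1 := by
  rw [abs_sub_le_iff]
  rcases x with x | j <;> rcases y with y | j' <;>
    simp only [attachPath, attachPathDistFrom] at h ⊢
  · have := h.diff_dist_adj (u := a)
    omega
  · obtain ⟨rfl, hj⟩ := h
    omega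
  · obtain ⟨rfl, hj⟩ := h
    omega
  · omega

theorem attachPath_dist_pathVert_inl (hG : G.Connected) (a : V) {i : ℕ} (hi : i ≤ d) :
    (attachPath G w d).dist (pathVert w d i) (Sum.inl a) = (d - i) + G.dist w a := by
  obtain ⟨p, hp⟩ := exists_walk_pathVert (G := G) (w := w) hi le_rfl
  obtain ⟨q, hq⟩ := (hG w a).exists_walk_length_eq_dist
  let f : G →g attachPath G w d := ⟨Sum.inl, id⟩
  have hlen :
      (p.append ((q.map f).copy pathVert_self.symm rfl)).length = (d - i) + G.dist w a := by
    simp [hp, hq]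
  refine (Walk.dist_eq_length_of_le_abs_sub _
    (abs_sub_attachPathDistFrom_le_one a) _ ?_).trans hlen
  rw [hlen, attachPathDistFrom_pathVert a hi, dist_comm]
  simp only [attachPathDistFrom, dist_self]
  refine le_trans ?_ (le_abs_self _)
  omega

theorem attachPath_dist_pathVert_pathVert {i j : ℕ} (hi : i ≤ d) (hj : j ≤ d) :
    (attachPath G w d).dist (pathVert w d i) (pathVert w d j) = Nat.dist i j := by
  obtain ⟨p, hp⟩ : ∃ p : (attachPath G w d).Walk (pathVert w d i) (pathVert w d j),
      p.length = Nat.dist i j := by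
    rcases le_total i j with hij | hji
    · obtain ⟨p, hp⟩ := exists_walk_pathVert (G := G) (w := w) hij hj
      exact ⟨p, by rw [hp, Nat.dist]; omega⟩
    · obtain ⟨p, hp⟩ := exists_walk_pathVert (G := G) (w := w) hji hi
      exact ⟨p.reverse, by rw [Walk.length_reverse, hp, Nat.dist]; omega⟩
  refine (Walk.dist_eq_length_of_le_abs_sub _
    (abs_sub_attachPathDistFrom_le_one w) _ ?_).trans hp
  rw [hp, attachPathDistFrom_pathVert w hi, attachPathDistFrom_pathVert w hj, dist_self, Nat.dist]
  rw [le_abs]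
  omega

theorem transmission_attachPath_pathVert [Fintype V] (hG : G.Connected) {i : ℕ} (hi : i ≤ d) :
    transmission (attachPath G w d) (pathVert w d i) =
      Fintype.card V * (d - i) + transmission G w + ∑ j : Fin d, Nat.dist i j := by
  have hpath (j : Fin d) :
      (attachPath G w d).dist (pathVert w d i) (Sum.inr j) = Nat.dist i j :=
    pathVert_val (w := w) j ▸ attachPath_dist_pathVert_pathVert hi j.isLt.le
  simp only [transmission, Fintype.sum_sum_type, attachPath_dist_pathVert_inl hG _ hi, hpath,
    Finset.sum_add_distrib, Finset.sum_const, Finset.card_univ, smul_eq_mul]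

def delVertAttachPathIso (G : SimpleGraph V) {v₁ w : V} (hw : w ≠ v₁) (d : ℕ) :
    delVert (attachPath G w d) (Sum.inl v₁) ≃g attachPath (delVert G v₁) ⟨w, hw⟩ d where
  toFun
    | ⟨Sum.inl a, h⟩ => Sum.inl ⟨a, fun ha => h (ha ▸ rfl)⟩
    | ⟨Sum.inr j, _⟩ => Sum.inr j
  invFun
    | Sum.inl a => ⟨Sum.inl a, by simpa using a.2⟩
    | Sum.inr j => ⟨Sum.inr j, Sum.inr_ne_inl⟩
  left_inv := by rintro ⟨_ | _, _⟩ <;> rfl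
  right_inv := by rintro (_ | _) <;> rfl
  map_rel_iff' := by
    rintro ⟨_ | _, _⟩ ⟨_ | _, _⟩ <;> simp [delVert, attachPath, Subtype.ext_iff]

theorem delVertAttachPathIso_pathVert {v₁ : V} (hw : w ≠ v₁) (i : ℕ)
    (hi : pathVert w d i ≠ Sum.inl v₁) :
    delVertAttachPathIso G hw d ⟨pathVert w d i, hi⟩ = pathVert ⟨w, hw⟩ d i := by
  unfold pathVert at hi ⊢
  split <;> rfl

end attachPath

theorem delta_attachPath_general {V : Type*} [Fintype V] [DecidableEq V]
    (G : SimpleGraph V) (hG : G.Connected) (v₁ w : V) (hne : v₁ ≠ w)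
    (hconn : (delVert G v₁).Connected)
    (d : ℕ) (hδ : delta G v₁ w = -(d : ℤ)) :
    ∀ i : ℕ, i ≤ d →
      delta (attachPath G w d) (Sum.inl v₁) (pathVert w d i) = -(i : ℤ) := by
  intro i hi
  have hw : w ≠ v₁ := hne.symm
  have hu : pathVert w d i ≠ Sum.inl v₁ := by
    unfold pathVert
    split <;> simp [hw]
  have hcard : Fintype.card {u : V // u ≠ v₁} + 1 = Fintype.card V := by
    rw [Fintype.card_subtype_compl, Fintype.card_subtype_eq]
    have := Fintype.card_pos_iff.mpr ⟨v₁⟩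
    omega
  rw [delta, dif_neg hw] at hδ
  rw [delta, dif_neg hu, ← (delVertAttachPathIso G hw d).transmission_eq,
    delVertAttachPathIso_pathVert, transmission_attachPath_pathVert hG hi,
    transmission_attachPath_pathVert hconn hi, ← hcard]
  push_cast [Nat.cast_sub hi] at hδ ⊢
  linarith

/-- If `δ_G(w) = −d` (with `d ≥ 1`), then after attaching a path
`u_d u_{d-1} ⋯ u_1 u_0` of length `d` at `w` (identifying `u_d` with `w`),
we have `δ_{G₂}(u_i) = −i` for every `0 ≤ i ≤ d`. -/
theorem delta_attachPath {V : Type*} [Fintype V] [DecidableEq V]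
    (G : SimpleGraph V) (hG : G.Connected) (v₁ w : V) (hne : v₁ ≠ w)
    (hconn : (delVert G v₁).Connected)
    (d : ℕ) (hd : 1 ≤ d) (hδ : delta G v₁ w = -(d : ℤ)) :
    ∀ i : ℕ, i ≤ d →
      delta (attachPath G w d) (Sum.inl v₁) (pathVert w d i) = -(i : ℤ) :=
  delta_attachPath_general G hG v₁ w hne hconn d hδ
end

section
/- The cycle C₁₁ on 11 vertices is a Šoltés graph: for every vertex v of C₁₁, the graph C₁₁ − v is connected and W(C₁₁ − v) = W(C₁₁) = W(P₁₀) = 165, where P₁₀ is the path graph on 10 vertices. -/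
open SimpleGraph

/-- Identify graph distance with an explicit function, and get reachability. -/
theorem dist_eq_of {V : Type*} (G : SimpleGraph V) (d : V → V → ℕ)
    (h0 : ∀ u v, d u v = 0 ↔ u = v)
    (hstep : ∀ u v, d u v ≠ 0 → ∃ w, G.Adj u w ∧ d w v + 1 = d u v)
    (hlb : ∀ u v w, G.Adj u w → d u v ≤ d w v + 1) :
    (∀ u v, G.Reachable u v) ∧ ∀ u v, G.dist u v = d u v := by
  have key : ∀ n u v, d u v = n → ∃ p : G.Walk u v, p.length = n := by
    intro n
    induction n with
    | zero => intro u v h; obtain rfl := (h0 u v).1 h; exact ⟨Walk.nil, rfl⟩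
    | succ n ih =>
      intro u v h
      obtain ⟨w, hadj, hw⟩ := hstep u v (by omega)
      obtain ⟨p, hp⟩ := ih w v (by omega)
      exact ⟨Walk.cons hadj p, by simp [hp]⟩
  have lb : ∀ u v (p : G.Walk u v), d u v ≤ p.length := by
    intro u v p
    induction p with
    | nil => simp [(h0 _ _).2 rfl]
    | @cons a b c hadj p ih =>
      have := hlb a c b hadj
      simp only [Walk.length_cons]; omega
  constructor
  · intro u v
    obtain ⟨p, _⟩ := key (d u v) u v rfl
    exact ⟨p⟩
  · intro u v
    obtain ⟨p, hp⟩ := key (d u v) u v rfl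
    have h1 : G.dist u v ≤ d u v := hp ▸ SimpleGraph.dist_le p
    have h2 : d u v ≤ G.dist u v := by
      obtain ⟨q, hq⟩ := SimpleGraph.Reachable.exists_walk_length_eq_dist ⟨p⟩
      exact hq ▸ lb u v q
    omega

/-- Explicit distance on the 11-cycle. -/
def dC (i j : Fin 11) : ℕ := min ((i.val + 11 - j.val) % 11) ((j.val + 11 - i.val) % 11)

/-- Explicit distance on the path on 10 vertices. -/
def dP (i j : Fin 10) : ℕ := max i.val j.val - min i.val j.val

/-- Position of `u` along the path obtained by deleting `v` from the 11-cycle. -/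
def cpos (v : Fin 11) (u : Fin 11) : ℕ := (u.val + 10 - v.val) % 11

/-- Explicit distance on the 11-cycle minus a vertex. -/
def dD (v : Fin 11) (a b : {u : Fin 11 // u ≠ v}) : ℕ :=
  max (cpos v a.val) (cpos v b.val) - min (cpos v a.val) (cpos v b.val)

instance (v : Fin 11) : DecidableRel (delVert (cycleGraph 11) v).Adj :=
  fun a b => inferInstanceAs (Decidable ((cycleGraph 11).Adj a.val b.val))

instance : DecidableRel (pathGraph 10).Adj :=
  fun _ _ => decidable_of_iff _ pathGraph_adj.symm

theorem cycle_dist : (∀ u v, (cycleGraph 11).Reachable u v) ∧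
    ∀ u v, (cycleGraph 11).dist u v = dC u v :=
  dist_eq_of _ dC (by decide) (by decide) (by decide)

theorem path_dist : (∀ u v, (pathGraph 10).Reachable u v) ∧
    ∀ u v, (pathGraph 10).dist u v = dP u v :=
  dist_eq_of _ dP (by decide) (by decide) (by decide)

theorem del_dist (x : Fin 11) : (∀ u v, (delVert (cycleGraph 11) x).Reachable u v) ∧
    ∀ u v, (delVert (cycleGraph 11) x).dist u v = dD x u v :=
  dist_eq_of _ (dD x) (by revert x; decide) (by revert x; decide) (by revert x; decide)

/-- `C₁₁` is a Šoltés graph: every vertex is good, and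
`W(C₁₁ − v) = W(C₁₁) = W(P₁₀) = 165`. -/
theorem cycleGraph_eleven_soltes :
    (∀ v : Fin 11, (delVert (cycleGraph 11) v).Connected ∧
      wiener (delVert (cycleGraph 11) v) = wiener (cycleGraph 11)) ∧
    wiener (cycleGraph 11) = wiener (pathGraph 10) ∧
    wiener (pathGraph 10) = 165 := by
  have hC : wiener (cycleGraph 11) = 165 := by
    unfold wiener
    rw [show (∑ u : Fin 11, ∑ v : Fin 11, (cycleGraph 11).dist u v)
        = ∑ u : Fin 11, ∑ v : Fin 11, dC u v by
      exact Finset.sum_congr rfl fun u _ =>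
        Finset.sum_congr rfl fun v _ => cycle_dist.2 u v]
    decide
  have hP : wiener (pathGraph 10) = 165 := by
    unfold wiener
    rw [show (∑ u : Fin 10, ∑ v : Fin 10, (pathGraph 10).dist u v)
        = ∑ u : Fin 10, ∑ v : Fin 10, dP u v by
      exact Finset.sum_congr rfl fun u _ =>
        Finset.sum_congr rfl fun v _ => path_dist.2 u v]
    decide
  refine ⟨fun v => ⟨?_, ?_⟩, hC.trans hP.symm, hP⟩
  · have : Nonempty {u : Fin 11 // u ≠ v} := ⟨⟨v + 1, by omega⟩⟩
    exact Connected.mk (fun u w => (del_dist v).1 u w)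
  · rw [hC]
    unfold wiener
    rw [show (∑ u : {u : Fin 11 // u ≠ v}, ∑ w, (delVert (cycleGraph 11) v).dist u w)
        = ∑ u : {u : Fin 11 // u ≠ v}, ∑ w, dD v u w by
      exact Finset.sum_congr rfl fun u _ =>
        Finset.sum_congr rfl fun w _ => (del_dist v).2 u w]
    revert v; decide
end
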